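/- arXiv:2501.12532 — 3 statements merged into one kernel-verified Lean document; each statement's English description precedes it below -/
import Mathlib

section
/- Fix d ≥ 1 and n_s ≥ 1. For a state in velocity equilibrium with velocity v₀ ∈ ℝ^d, define for each basis index k the vector z_k ∈ ℝ^{d+1+n_s} with momentum components z_k,ρv_j = v₀,j · Σ_{i=1}^{n_s} W_i g_{k,i}, pressure component equal to a common constant P₀, and species components z_k,C_i = g_{k,i}, for given reals g_{k,i} and positive molar masses W_i. Then for any scalar α, the velocity-equilibrium contribution (α/ρ)[ (ẑ_k − z̄)_{ρv} − v₀ Σ_{i=1}^{n_s} W_i (ẑ_k − z̄)_{C_i} ] equals zero for every k, where z̄ is the mean of the z_k over k. -/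
theorem stmt6 (d n_s n_b : ℕ) (hd : 1 ≤ d) (hns : 1 ≤ n_s) (hnb : 0 < n_b)
    (ρ : ℝ) (hρ : 0 < ρ) (W : Fin n_s → ℝ) (hW : ∀ i, 0 < W i)
    (v0 : Fin d → ℝ) (P0 : ℝ) (g : Fin n_b → Fin n_s → ℝ) (α : ℝ)
    (zρv : Fin n_b → Fin d → ℝ) (zP : Fin n_b → ℝ) (zC : Fin n_b → Fin n_s → ℝ)
    (hzρv : ∀ k j, zρv k j = v0 j * ∑ i, W i * g k i)
    (hzP : ∀ k, zP k = P0)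
    (hzC : ∀ k i, zC k i = g k i)
    (zρvbar : Fin d → ℝ) (zCbar : Fin n_s → ℝ)
    (hzρvbar : ∀ j, zρvbar j = (1 / (n_b : ℝ)) * ∑ k, zρv k j)
    (hzCbar : ∀ i, zCbar i = (1 / (n_b : ℝ)) * ∑ k, zC k i) :
    ∀ k j, (α / ρ) * ((zρv k j - zρvbar j) -
        v0 j * ∑ i, W i * (zC k i - zCbar i)) = 0 := by
  intro k j
  have h : ∑ i, W i * (zC k i - zCbar i)
      = (∑ i, W i * g k i) - (1 / (n_b : ℝ)) * ∑ k', ∑ i, W i * g k' i := by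
    simp only [hzC, hzCbar, mul_sub, Finset.sum_sub_distrib, mul_comm, Finset.mul_sum]
    rw [Finset.sum_comm]
    ring_nf
    congr 1
    exact Finset.sum_congr rfl fun _ _ => Finset.sum_congr rfl fun _ _ => by ring
  rw [h, hzρv, hzρvbar]
  simp only [hzρv]
  rw [← Finset.mul_sum]
  ring
end

section
/- For a monocomponent calorically perfect gas (ρu = P/(γ−1), γ > 1 constant) with constant pressure P₀ and velocity v₀, the Lax–Friedrichs flux satisfies the pointwise pressure-equilibrium relation: v₀P₀/(γ−1)·n − F_{ρe_t}† + v₀ F_{ρv}† − ½v₀² W F_C† = 0, where F_{ρe_t}† = v₀(P₀/(γ−1) + ½v₀²·½(ρ⁺+ρ⁻) + P₀)·n + ½λ(ρe_t⁺ − ρe_t⁻), F_{ρv}† = (v₀²·½(ρ⁺+ρ⁻) + P₀)·n + ½λ v₀(ρ⁺−ρ⁻), and W F_C† = v₀·½(ρ⁺+ρ⁻)·n + ½λ(ρ⁺−ρ⁻), with ρe_t^± = P₀/(γ−1) + ½ρ^± v₀². -/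
theorem stmt13 (ρp ρm P0 v0 lam n γ : ℝ) (hρp : 0 < ρp) (hρm : 0 < ρm)
    (hn : n = -1 ∨ n = 1) (hlam : 0 ≤ lam) (hγ : 1 < γ)
    (ρetp ρetm Fρet Fρv WFC : ℝ)
    (hρetp : ρetp = P0 / (γ - 1) + (1 / 2) * ρp * v0 ^ 2)
    (hρetm : ρetm = P0 / (γ - 1) + (1 / 2) * ρm * v0 ^ 2)
    (hFρet : Fρet = v0 * (P0 / (γ - 1) + (1 / 2) * v0 ^ 2 * ((ρp + ρm) / 2) + P0) * n
        + (1 / 2) * lam * (ρetp - ρetm))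
    (hFρv : Fρv = (v0 ^ 2 * ((ρp + ρm) / 2) + P0) * n + (1 / 2) * lam * v0 * (ρp - ρm))
    (hWFC : WFC = v0 * ((ρp + ρm) / 2) * n + (1 / 2) * lam * (ρp - ρm)) :
    v0 * P0 / (γ - 1) * n - Fρet + v0 * Fρv - (1 / 2) * v0 ^ 2 * WFC = 0 := by
  subst hρetp hρetm hFρet hFρv hWFC
  ring
end

section
/- Suppose for each l with C̄_l = 0 the l-th species component of the correction r_k is set to zero. Then the modified correction preserves zero species concentrations: if the element average of C_l is zero and the inter-element jumps in C_l vanish, then d/dt of the coefficients of C_l contributed by the correction is zero, so C_l remains identically zero; moreover the corrected residual remains conservative, Σ_{k=1}^{n_b} r_k = 0. -/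
/-- Zeroing the species components of the correction for species with zero
element-average concentration preserves zero species concentrations and keeps
the correction conservative. -/
theorem stmt18 (n_b n_s : ℕ) (hnb : 0 < n_b) (α : ℝ)
    (z : Fin n_b → Fin n_s → ℝ) (zbar : Fin n_s → ℝ)
    (hzbar : ∀ i, zbar i = (1 / (n_b : ℝ)) * ∑ k, z k i)
    (Cbar : Fin n_s → ℝ)
    (r : Fin n_b → Fin n_s → ℝ)
    (hr : ∀ k i, r k i = if Cbar i = 0 then 0 else α * (z k i - zbar i)) :
    (∀ i, Cbar i = 0 → ∀ k, r k i = 0) ∧ (∀ i, ∑ k, r k i = 0) := by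
  constructor
  · intro i hi k; rw [hr, if_pos hi]
  · intro i
    by_cases hi : Cbar i = 0
    · simp [hr, hi]
    · have hn : (n_b : ℝ) ≠ 0 := Nat.cast_ne_zero.mpr hnb.ne'
      simp only [hr, if_neg hi]
      have : ∑ k : Fin n_b, (z k i - zbar i) = 0 := by
        rw [Finset.sum_sub_distrib, Finset.sum_const, Finset.card_univ, Fintype.card_fin,
          hzbar i]
        rw [nsmul_eq_mul]
        field_simp
        ring
      rw [← Finset.mul_sum, this, mul_zero]
end
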